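/- arXiv:2105.13322 — 2 statements merged into one kernel-verified Lean document; each statement's English description precedes it below -/
import Mathlib

section
/- Let G be a finite cyclic group. Then κ(P(G)) = δ(P(G)) if and only if |G| is a prime power or twice a prime power. -/
/-!
In a cyclic group two elements are adjacent in the power graph iff their orders are comparable
under divisibility, so `x` and `x⁻¹` are twins. If `2 < orderOf x` and some element has order
incomparable with `orderOf x`, deleting the neighbours of `x` other than `x⁻¹` cuts off the edge
`{x, x⁻¹}`, so `κ < deg x`. Unless `|G|` is `p ^ k` or `2 * p ^ k`, every vertex has degree at least
that of such an `x`: a dominating vertex is beaten by an element of odd prime order, and the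
involution by an element of order `2 * p` for a suitable prime `p ∣ |G| / 2`. Hence `κ < δ`.

If `|G| = p ^ k` the power graph is complete. If `|G| = 2 * p ^ k` with `p` odd, it is the union of
the cliques `{x | x ^ p ^ k = 1}` and its complement, joined by the perfect matching `x ↔ x * t`
(`t` the involution). Deleting fewer than `p ^ k` vertices misses an edge of the matching, so
`p ^ k ≤ κ`, while the involution has degree at most `p ^ k`.
-/

/-- The power graph of a group: distinct `x` and `y` are adjacent iff one is a
positive power of the other. -/
def powerGraph (G : Type*) [Group G] : SimpleGraph G where
  Adj x y := x ≠ y ∧ ((∃ k : ℕ, 0 < k ∧ x = y ^ k) ∨ (∃ k : ℕ, 0 < k ∧ y = x ^ k))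
  symm := by
    constructor
    intro x y h
    exact ⟨h.1.symm, h.2.symm⟩
  loopless := by
    constructor
    intro x h
    exact h.1 rfl

noncomputable instance powerGraphDecidableAdj (G : Type*) [Group G] :
    DecidableRel (powerGraph G).Adj :=
  Classical.decRel _

/-- The vertex connectivity of a finite graph: the minimum number of vertices whose
deletion yields a disconnected graph or a graph with exactly one vertex. -/
noncomputable def vertexConnectivity {V : Type*} [Fintype V] (Γ : SimpleGraph V) : ℕ :=
  sInf {n | ∃ S : Finset V, S.card = n ∧
    (¬ (SimpleGraph.induce ((↑S : Set V)ᶜ) Γ).Preconnected ∨ ((↑S : Set V)ᶜ).ncard = 1)}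

/-- A subgroup is a maximal cyclic subgroup if it is cyclic and not properly contained
in any cyclic subgroup. -/
def IsMaximalCyclic {G : Type*} [Group G] (M : Subgroup G) : Prop :=
  IsCyclic ↥M ∧ ∀ N : Subgroup G, IsCyclic ↥N → M ≤ N → M = N

/-- `K` is a maximal cyclic subgroup of the subgroup `H`. -/
def IsMaximalCyclicIn {G : Type*} [Group G] (H K : Subgroup G) : Prop :=
  IsCyclic ↥K ∧ K ≤ H ∧ ∀ N : Subgroup G, IsCyclic ↥N → N ≤ H → K ≤ N → K = N

/-- A generalized quaternion group: a dicyclic group `Q_{4n}` with `n ≥ 2` a power of 2. -/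
def IsGeneralizedQuaternion (G : Type*) [Group G] : Prop :=
  ∃ n : ℕ, 2 ≤ n ∧ (∃ k : ℕ, n = 2 ^ k) ∧ Nonempty (G ≃* QuaternionGroup n)

open Finset

theorem Nat.exists_prime_lt_prime_dvd_of_ne_prime_pow {n : ℕ} (hn : n ≠ 0)
    (h : ∀ p k : ℕ, p.Prime → n ≠ p ^ k) :
    ∃ p q : ℕ, p.Prime ∧ q.Prime ∧ p < q ∧ p ∣ n ∧ q ∣ n := by
  have hmin : n.minFac.Prime := Nat.minFac_prime fun h1 => h 2 0 Nat.prime_two (by simp [h1])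
  by_contra! hc
  refine h _ _ hmin (Nat.eq_prime_pow_of_unique_prime_dvd hn fun hq hqn => ?_)
  rcases (Nat.minFac_le_of_dvd hq.two_le hqn).lt_or_eq with hlt | heq
  · exact absurd hqn (hc _ _ hmin hq hlt (Nat.minFac_dvd n))
  · exact heq.symm

theorem Nat.dvd_or_dvd_of_dvd_prime_pow {p k a b : ℕ} (hp : p.Prime) (ha : a ∣ p ^ k)
    (hb : b ∣ p ^ k) : a ∣ b ∨ b ∣ a := by
  obtain ⟨i, -, rfl⟩ := (Nat.dvd_prime_pow hp).1 ha
  obtain ⟨j, -, rfl⟩ := (Nat.dvd_prime_pow hp).1 hb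
  exact (le_total i j).imp (pow_dvd_pow p) (pow_dvd_pow p)

theorem Nat.exists_eq_two_mul_of_dvd_two_mul {a m : ℕ} (ha : a ∣ 2 * m) (hm : ¬ a ∣ m) :
    ∃ b, b ∣ m ∧ a = 2 * b := by
  obtain ⟨y, z, hy, hz, rfl⟩ := Nat.dvd_mul.1 ha
  rcases (Nat.dvd_prime Nat.prime_two).1 hy with rfl | rfl
  · exact absurd (by simpa using hz) hm
  · exact ⟨z, hz, rfl⟩

section Connectivity

variable {V : Type*} {Γ : SimpleGraph V}

theorem SimpleGraph.IsClique.reachable_induce {C s : Set V} (hC : Γ.IsClique C) {u v : s}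
    (hu : u.1 ∈ C) (hv : v.1 ∈ C) : (Γ.induce s).Reachable u v := by
  rcases eq_or_ne u v with rfl | huv
  · rfl
  · exact SimpleGraph.Adj.reachable (hC hu hv fun h => huv (Subtype.ext h))

theorem SimpleGraph.preconnected_induce_of_isClique_union {A B s : Set V} (hA : Γ.IsClique A)
    (hB : Γ.IsClique B) (hs : s ⊆ A ∪ B) {a b : s} (ha : a.1 ∈ A) (hb : b.1 ∈ B)
    (hab : Γ.Adj a b) : (Γ.induce s).Preconnected := by
  have reach_a : ∀ u : s, (Γ.induce s).Reachable u a := fun u => by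
    rcases hs u.2 with hu | hu
    · exact hA.reachable_induce hu ha
    · exact (hB.reachable_induce hu hb).trans
        (SimpleGraph.Adj.reachable (show (Γ.induce s).Adj a b from hab)).symm
  exact fun u v => (reach_a u).trans (reach_a v).symm

variable [Fintype V]

theorem vertexConnectivity_le_card_of_separates (S : Finset V) {K : Set V}
    (hK : ∀ u ∈ K, ∀ w, Γ.Adj u w → w ∉ S → w ∈ K) {x z : V} (hx : x ∈ K) (hxS : x ∉ S)
    (hz : z ∉ K) (hzS : z ∉ S) : vertexConnectivity Γ ≤ S.card := by
  refine Nat.sInf_le ⟨S, rfl, Or.inl fun hpre => ?_⟩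
  obtain ⟨p⟩ := hpre ⟨x, hxS⟩ ⟨z, hzS⟩
  obtain ⟨d, -, hd, hd'⟩ := p.exists_boundary_dart {u | u.1 ∈ K} hx hz
  exact hd' (hK _ hd _ d.adj d.snd.2)

theorem le_vertexConnectivity {m : ℕ} (hm : m < Fintype.card V)
    (h : ∀ S : Finset V, S.card < m → (Γ.induce (↑S : Set V)ᶜ).Preconnected) :
    m ≤ vertexConnectivity Γ := by
  classical
  obtain ⟨v⟩ : Nonempty V := Fintype.card_pos_iff.1 (by omega)
  refine le_csInf ⟨_, univ.erase v, rfl, Or.inr ?_⟩ ?_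
  · simp [Set.compl_eq_univ_sdiff]
  rintro _ ⟨S, rfl, hS | hS⟩ <;> by_contra! hlt
  · exact hS (h S hlt)
  · rw [Set.ncard_compl, Set.ncard_coe_finset, Nat.card_eq_fintype_card] at hS
    omega

variable [DecidableRel Γ.Adj]

theorem vertexConnectivity_le_degree (v : V) : vertexConnectivity Γ ≤ Γ.degree v := by
  rw [← SimpleGraph.card_neighborFinset_eq_degree]
  by_cases h : ∃ z, z ≠ v ∧ ¬ Γ.Adj v z
  · obtain ⟨z, hzv, hz⟩ := h
    refine vertexConnectivity_le_card_of_separates _ (K := {v}) ?_ rfl (by simp) hzv (by simpa)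
    rintro u rfl w huw hw
    exact absurd (by simpa using huw) hw
  · push Not at h
    refine Nat.sInf_le ⟨_, rfl, Or.inr (Set.ncard_eq_one.2 ⟨v, ?_⟩)⟩
    ext w
    simpa using ⟨fun hw => by_contra fun hwv => hw (h w hwv), fun hw => hw ▸ Γ.irrefl⟩

theorem vertexConnectivity_le_minDegree [Nonempty V] : vertexConnectivity Γ ≤ Γ.minDegree := by
  obtain ⟨v, hv⟩ := Γ.exists_minimal_degree_vertex
  exact hv ▸ vertexConnectivity_le_degree v

theorem vertexConnectivity_lt_degree_of_twin {x y z : V} (hxy : Γ.Adj x y)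
    (htwin : ∀ w, w ≠ x → Γ.Adj y w → Γ.Adj x w) (hzx : z ≠ x) (hz : ¬ Γ.Adj x z) :
    vertexConnectivity Γ < Γ.degree x := by
  classical
  have hy : y ∈ Γ.neighborFinset x := by simpa using hxy
  have hcut : vertexConnectivity Γ ≤ ((Γ.neighborFinset x).erase y).card := by
    refine vertexConnectivity_le_card_of_separates _ (K := {x, y}) ?_ (x := x) (z := z)
      (by simp) (by simp) ?_ (by simp [hz])
    · rintro u hu w huw hw
      simp only [mem_erase, SimpleGraph.mem_neighborFinset, not_and_or, not_not] at hw
      rcases hw with rfl | hxw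
      · simp
      · rcases hu with rfl | rfl
        · exact absurd huw hxw
        · rcases eq_or_ne w x with rfl | hwx
          · simp
          · exact absurd (htwin w hwx huw) hxw
    · rintro (rfl | rfl)
      exacts [hzx rfl, hz hxy]
  rw [card_erase_of_mem hy, SimpleGraph.card_neighborFinset_eq_degree] at hcut
  have : 0 < Γ.degree x := (Γ.degree_pos_iff_exists_adj x).2 ⟨y, hxy⟩
  omega

end Connectivity

section PowerGraph

variable {G : Type*} [Group G]

theorem exists_pos_pow_eq_iff_mem_zpowers [Finite G] {x y : G} :
    (∃ k : ℕ, 0 < k ∧ x = y ^ k) ↔ x ∈ Subgroup.zpowers y := by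
  refine ⟨fun ⟨k, _, hk⟩ => hk ▸ Subgroup.npow_mem_zpowers y k, fun h => ?_⟩
  obtain ⟨k, rfl⟩ := (Submonoid.mem_powers_iff _ _).1 (mem_powers_iff_mem_zpowers.2 h)
  rcases Nat.eq_zero_or_pos k with rfl | hk
  · exact ⟨orderOf y, orderOf_pos y, by rw [pow_zero, pow_orderOf_eq_one]⟩
  · exact ⟨k, hk, rfl⟩

theorem powerGraph_adj_iff_mem_zpowers [Finite G] {x y : G} :
    (powerGraph G).Adj x y ↔ x ≠ y ∧ (x ∈ Subgroup.zpowers y ∨ y ∈ Subgroup.zpowers x) := by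
  simp only [powerGraph, exists_pos_pow_eq_iff_mem_zpowers]

variable [Fintype G] [IsCyclic G]

theorem IsCyclic.mem_zpowers_iff_orderOf_dvd {x y : G} :
    x ∈ Subgroup.zpowers y ↔ orderOf x ∣ orderOf y := by
  classical
  refine ⟨orderOf_dvd_of_mem_zpowers, fun h => ?_⟩
  -- `zpowers y` has `orderOf y` elements, all of them roots of `a ^ orderOf y = 1`,
  -- and a cyclic group has at most that many such roots.
  have hsub : ({a | a ∈ Subgroup.zpowers y} : Finset G) ⊆
      ({a | a ^ orderOf y = 1} : Finset G) := by
    intro a ha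
    simpa [← orderOf_dvd_iff_pow_eq_one] using orderOf_dvd_of_mem_zpowers (mem_filter.1 ha).2
  have hcard : #({a | a ∈ Subgroup.zpowers y} : Finset G) = orderOf y := by
    rw [← Fintype.card_subtype, Fintype.card_eq_nat_card]
    exact Nat.card_zpowers y
  have heq := eq_of_subset_of_card_le hsub <| by
    rw [hcard]
    exact IsCyclic.card_pow_eq_one_le (orderOf_pos y)
  have hx : x ∈ ({a | a ^ orderOf y = 1} : Finset G) := by
    simpa [← orderOf_dvd_iff_pow_eq_one] using h
  rw [← heq] at hx
  simpa using hx

theorem IsCyclic.exists_orderOf_eq {d : ℕ} (hd : d ∣ Fintype.card G) :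
    ∃ x : G, orderOf x = d := by
  obtain ⟨g, hg⟩ := IsCyclic.exists_ofOrder_eq_natCard (α := G)
  rw [Nat.card_eq_fintype_card] at hg
  exact ⟨g ^ (orderOf g / d), orderOf_pow_orderOf_div (by simp [hg]) (hg ▸ hd)⟩

theorem IsCyclic.eq_of_orderOf_eq_two {s t : G} (hs : orderOf s = 2)
    (ht : orderOf t = 2) : s = t := by
  classical
  have hcard := IsCyclic.card_orderOf_eq_totient (α := G) (hs ▸ orderOf_dvd_card (x := s))
  rw [Nat.totient_two] at hcard
  exact card_le_one.1 hcard.le s (by simp [hs]) t (by simp [ht])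

theorem powerGraph_adj_iff_orderOf_dvd {x y : G} :
    (powerGraph G).Adj x y ↔ x ≠ y ∧ (orderOf x ∣ orderOf y ∨ orderOf y ∣ orderOf x) := by
  simp only [powerGraph_adj_iff_mem_zpowers, IsCyclic.mem_zpowers_iff_orderOf_dvd]

variable (G) in
noncomputable def orderComparable (d : ℕ) : Finset G :=
  {w | orderOf w ∣ d ∨ d ∣ orderOf w}

theorem powerGraph_degree_add_one (x : G) :
    (powerGraph G).degree x + 1 = #(orderComparable G (orderOf x)) := by
  classical
  have hnbr : (powerGraph G).neighborFinset x = (orderComparable G (orderOf x)).erase x := by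
    ext w
    simp [orderComparable, powerGraph_adj_iff_orderOf_dvd, ne_comm, or_comm]
  rw [← SimpleGraph.card_neighborFinset_eq_degree, hnbr,
    card_erase_add_one (by simp [orderComparable])]

theorem powerGraph_degree_le_degree_iff {x y : G} :
    (powerGraph G).degree x ≤ (powerGraph G).degree y ↔
      #(orderComparable G (orderOf x)) ≤ #(orderComparable G (orderOf y)) := by
  rw [← powerGraph_degree_add_one, ← powerGraph_degree_add_one, Nat.add_le_add_iff_right]

theorem powerGraph_vertexConnectivity_lt_degree {x z : G} (hx : 2 < orderOf x)
    (hzx : ¬ orderOf z ∣ orderOf x) (hxz : ¬ orderOf x ∣ orderOf z) :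
    vertexConnectivity (powerGraph G) < (powerGraph G).degree x := by
  have hxinv : x ≠ x⁻¹ := fun h => by
    have : orderOf x ∣ 2 := orderOf_dvd_of_pow_eq_one (by rw [sq, ← mul_inv_cancel x, ← h])
    have := Nat.le_of_dvd two_pos this
    omega
  refine vertexConnectivity_lt_degree_of_twin (y := x⁻¹) (z := z) ?_ ?_ ?_ ?_
  · exact powerGraph_adj_iff_orderOf_dvd.2 ⟨hxinv, by simp⟩
  · intro w hwx hw
    rw [powerGraph_adj_iff_orderOf_dvd, orderOf_inv] at hw
    exact powerGraph_adj_iff_orderOf_dvd.2 ⟨Ne.symm hwx, hw.2⟩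
  · rintro rfl
    exact hzx dvd_rfl
  · rw [powerGraph_adj_iff_orderOf_dvd]
    tauto

end PowerGraph

section Forward

variable {G : Type*} [Group G] [Fintype G] [IsCyclic G]

theorem card_orderComparable_two_mul_le {p q : ℕ} (hp : p.Prime) (hq : q.Prime) (hpq : p < q)
    (hpG : p ∣ Fintype.card G) (hqG : 2 * q ∣ Fintype.card G) :
    #(orderComparable G (2 * p)) ≤ #(orderComparable G 2) := by
  classical
  -- Passing from `2` to `2 * p` gains the elements of order `p` and loses those of order `2 * q`.
  set E : Finset G := {w | orderOf w = 2 * q}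
  set F : Finset G := {w | orderOf w = p}
  have hq2 : q ≠ 2 := by have := hp.two_le; omega
  have hE : #E = q - 1 := by
    rw [IsCyclic.card_orderOf_eq_totient hqG,
      Nat.totient_mul ((Nat.coprime_primes Nat.prime_two hq).2 hq2.symm), Nat.totient_two,
      one_mul, Nat.totient_prime hq]
  have hF : #F = p - 1 := by rw [IsCyclic.card_orderOf_eq_totient hpG, Nat.totient_prime hp]
  have hEsub : E ⊆ orderComparable G 2 := fun w hw => by
    simp_all [E, orderComparable]
  have hsub : orderComparable G (2 * p) ⊆ (orderComparable G 2 \ E) ∪ F := by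
    intro w hw
    simp only [orderComparable, E, F, mem_union, mem_sdiff, mem_filter, mem_univ,
      true_and] at hw ⊢
    by_cases h2 : orderOf w ∣ 2 ∨ 2 ∣ orderOf w
    · refine Or.inl ⟨h2, fun hw2q => ?_⟩
      rw [hw2q, Nat.mul_dvd_mul_iff_left two_pos, Nat.mul_dvd_mul_iff_left two_pos] at hw
      rcases hw with h | h
      · exact hpq.ne' ((Nat.prime_dvd_prime_iff_eq hq hp).1 h)
      · exact hpq.ne ((Nat.prime_dvd_prime_iff_eq hp hq).1 h)
    · push Not at h2
      have hw2p : orderOf w ∣ 2 * p :=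
        hw.resolve_right fun h => h2.2 ((dvd_mul_right 2 p).trans h)
      have hcop : (orderOf w).Coprime 2 :=
        ((Nat.Prime.coprime_iff_not_dvd Nat.prime_two).2 h2.2).symm
      rcases (Nat.dvd_prime hp).1 (hcop.dvd_of_dvd_mul_left hw2p) with h | h
      · exact absurd (h ▸ one_dvd 2) h2.1
      · exact Or.inr h
  calc #(orderComparable G (2 * p)) ≤ #((orderComparable G 2 \ E) ∪ F) := card_le_card hsub
    _ ≤ #(orderComparable G 2 \ E) + #F := card_union_le _ _
    _ ≤ #(orderComparable G 2) := by
      rw [card_sdiff_of_subset hEsub]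
      have := card_le_card hEsub
      omega

theorem powerGraph_exists_incomparable_degree_le_of_orderOf_eq_two {x : G} (hx : orderOf x = 2)
    (hn : ∀ p k : ℕ, p.Prime → Fintype.card G ≠ 2 * p ^ k) :
    ∃ x' z : G, (powerGraph G).degree x' ≤ (powerGraph G).degree x ∧ 2 < orderOf x' ∧
      ¬ orderOf z ∣ orderOf x' ∧ ¬ orderOf x' ∣ orderOf z := by
  obtain ⟨m, hm⟩ : 2 ∣ Fintype.card G := hx ▸ orderOf_dvd_card
  obtain ⟨p, q, hp, hq, hpq, hpm, hqm⟩ := Nat.exists_prime_lt_prime_dvd_of_ne_prime_pow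
    (by rintro rfl; exact Fintype.card_ne_zero hm) fun p k hp h => hn p k hp (h ▸ hm)
  have hq2 : q ≠ 2 := by have := hp.two_le; omega
  obtain ⟨x', hx'⟩ := IsCyclic.exists_orderOf_eq (G := G) (hm ▸ mul_dvd_mul_left 2 hpm)
  obtain ⟨z, hz⟩ := IsCyclic.exists_orderOf_eq (G := G) (hm ▸ hqm.mul_left 2)
  refine ⟨x', z, powerGraph_degree_le_degree_iff.2 ?_, ?_, ?_, ?_⟩
  · rw [hx', hx]
    exact card_orderComparable_two_mul_le hp hq hpq (hm ▸ hpm.mul_left 2)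
      (hm ▸ mul_dvd_mul_left 2 hqm)
  · have := hp.two_le
    omega
  · rw [hz, hx']
    intro h
    rcases (Nat.Prime.dvd_mul hq).1 h with h | h
    · exact hq2 ((Nat.prime_dvd_prime_iff_eq hq Nat.prime_two).1 h)
    · exact hpq.ne' ((Nat.prime_dvd_prime_iff_eq hq hp).1 h)
  · rw [hz, hx']
    exact fun h =>
      hq2 ((Nat.prime_dvd_prime_iff_eq Nat.prime_two hq).1 (dvd_of_mul_right_dvd h)).symm

theorem powerGraph_exists_incomparable_degree_le
    (hn : ¬ ∃ p k : ℕ, p.Prime ∧ (Fintype.card G = p ^ k ∨ Fintype.card G = 2 * p ^ k)) (x : G) :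
    ∃ x' z : G, (powerGraph G).degree x' ≤ (powerGraph G).degree x ∧ 2 < orderOf x' ∧
      ¬ orderOf z ∣ orderOf x' ∧ ¬ orderOf x' ∣ orderOf z := by
  push Not at hn
  by_cases hall : ∀ z : G, orderOf z ∣ orderOf x ∨ orderOf x ∣ orderOf z
  · -- `x` is adjacent to every other vertex; use an element of odd prime order instead.
    obtain ⟨p, q, hp, hq, hpq, hpn, hqn⟩ := Nat.exists_prime_lt_prime_dvd_of_ne_prime_pow
      Fintype.card_ne_zero fun p k hp => (hn p k hp).1
    obtain ⟨x', hx'⟩ := IsCyclic.exists_orderOf_eq (G := G) hqn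
    obtain ⟨z, hz⟩ := IsCyclic.exists_orderOf_eq (G := G) hpn
    have huniv : orderComparable G (orderOf x) = univ :=
      eq_univ_of_forall fun w => by simpa [orderComparable] using hall w
    refine ⟨x', z, powerGraph_degree_le_degree_iff.2 (huniv ▸ card_le_univ _),
      hx' ▸ hp.two_le.trans_lt hpq, ?_, ?_⟩ <;> rw [hz, hx'] <;> intro h
    · exact hpq.ne ((Nat.prime_dvd_prime_iff_eq hp hq).1 h)
    · exact hpq.ne' ((Nat.prime_dvd_prime_iff_eq hq hp).1 h)
  push Not at hall
  obtain ⟨z, hzx, hxz⟩ := hall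
  by_cases hx2 : 2 < orderOf x
  · exact ⟨x, z, le_rfl, hx2, hzx, hxz⟩
  have hx1 : orderOf x ≠ 1 := fun h => hxz (h ▸ one_dvd _)
  have := orderOf_pos x
  exact powerGraph_exists_incomparable_degree_le_of_orderOf_eq_two (by omega)
    fun p k hp => (hn p k hp).2

theorem powerGraph_vertexConnectivity_lt_minDegree
    (hn : ¬ ∃ p k : ℕ, p.Prime ∧ (Fintype.card G = p ^ k ∨ Fintype.card G = 2 * p ^ k)) :
    vertexConnectivity (powerGraph G) < (powerGraph G).minDegree := by
  obtain ⟨x, hx⟩ := (powerGraph G).exists_minimal_degree_vertex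
  obtain ⟨x', z, hdeg, hx', hzx, hxz⟩ := powerGraph_exists_incomparable_degree_le hn x
  exact hx ▸ (powerGraph_vertexConnectivity_lt_degree hx' hzx hxz).trans_le hdeg

end Forward

section Backward

variable {G : Type*} [Group G] [Fintype G] [IsCyclic G]

theorem powerGraph_vertexConnectivity_eq_minDegree_of_card_eq_prime_pow {p k : ℕ}
    (hp : p.Prime) (hcard : Fintype.card G = p ^ k) :
    vertexConnectivity (powerGraph G) = (powerGraph G).minDegree := by
  have hclique : (powerGraph G).IsClique Set.univ := fun x _ y _ hxy =>
    powerGraph_adj_iff_orderOf_dvd.2 ⟨hxy, Nat.dvd_or_dvd_of_dvd_prime_pow hp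
      (hcard ▸ orderOf_dvd_card) (hcard ▸ orderOf_dvd_card)⟩
  refine le_antisymm vertexConnectivity_le_minDegree ?_
  calc (powerGraph G).minDegree ≤ Fintype.card G - 1 :=
        Nat.le_sub_one_of_lt (powerGraph G).minDegree_lt_card
    _ ≤ vertexConnectivity (powerGraph G) :=
        le_vertexConnectivity (Nat.sub_one_lt Fintype.card_ne_zero) fun _ _ _ _ =>
          hclique.reachable_induce trivial trivial

section TwiceOdd

variable {m : ℕ} {t : G}

theorem IsCyclic.pow_eq_one_or_eq_of_card_eq_two_mul (hcard : Fintype.card G = 2 * m)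
    (ht : orderOf t = 2) (x : G) : x ^ m = 1 ∨ x ^ m = t := by
  refine or_iff_not_imp_left.2 fun hx => IsCyclic.eq_of_orderOf_eq_two ?_ ht
  have : Fact (Nat.Prime 2) := ⟨Nat.prime_two⟩
  exact orderOf_eq_prime (by rw [← pow_mul, mul_comm, ← hcard, pow_card_eq_one]) hx

theorem IsCyclic.mul_pow_eq_one_iff_pow_ne_one (hm : Odd m) (hcard : Fintype.card G = 2 * m)
    (ht : orderOf t = 2) (x : G) : (x * t) ^ m = 1 ↔ x ^ m ≠ 1 := by
  have htt : t * t = 1 := by rw [← sq, ← ht, pow_orderOf_eq_one]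
  have ht1 : t ≠ 1 := by rintro rfl; simp at ht
  have htm : t ^ m = t := by
    obtain ⟨j, rfl⟩ := hm
    rw [pow_succ, pow_mul, sq, htt, one_pow, one_mul]
  rw [Commute.mul_pow (mul_comm' x t), htm]
  rcases pow_eq_one_or_eq_of_card_eq_two_mul hcard ht x with h | h <;> simp [h, htt, ht1]

theorem powerGraph_adj_mul_of_pow_eq_one (hm : Odd m) (ht : orderOf t = 2) {x : G}
    (hx : x ^ m = 1) : (powerGraph G).Adj x (x * t) := by
  have hcop : (orderOf x).Coprime (orderOf t) :=
    ht ▸ hm.coprime_two_right.coprime_dvd_left (orderOf_dvd_of_pow_eq_one hx)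
  refine powerGraph_adj_iff_orderOf_dvd.2 ⟨fun h => ?_, Or.inl ?_⟩
  · rw [left_eq_mul, ← orderOf_eq_one_iff] at h
    omega
  · rw [Commute.orderOf_mul_eq_mul_orderOf_of_coprime (mul_comm' x t) hcop]
    exact dvd_mul_right _ _

theorem powerGraph_minDegree_le_of_card_eq_two_mul (hm : Odd m)
    (hcard : Fintype.card G = 2 * m) : (powerGraph G).minDegree ≤ m := by
  classical
  obtain ⟨t, ht⟩ := IsCyclic.exists_orderOf_eq (G := G) (hcard ▸ dvd_mul_right 2 m)
  set A : Finset G := {x | x ^ m = 1}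
  set B : Finset G := {x | x ^ m ≠ 1}
  have htB : t ∈ B := by
    simpa [B] using (IsCyclic.mul_pow_eq_one_iff_pow_ne_one hm hcard ht 1).not.2 (by simp)
  have hBA : #B ≤ #A := card_le_card_of_injOn (· * t)
    (fun x hx => by simpa [A, B, IsCyclic.mul_pow_eq_one_iff_pow_ne_one hm hcard ht] using hx)
    (mul_left_injective t).injOn
  have hA : #A ≤ m := IsCyclic.card_pow_eq_one_le hm.pos
  have hnbr : (powerGraph G).neighborFinset t ⊆ insert 1 (B.erase t) := by
    intro w hw
    rw [SimpleGraph.mem_neighborFinset, powerGraph_adj_iff_orderOf_dvd, ht] at hw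
    rw [mem_insert, mem_erase]
    by_cases hwm : w ^ m = 1
    · have hwm' := orderOf_dvd_of_pow_eq_one hwm
      refine Or.inl (orderOf_eq_one_iff.1 ?_)
      rcases hw.2 with h | h
      · exact absurd (h.trans hwm') (by simpa [← even_iff_two_dvd] using hm)
      · exact Nat.eq_one_of_dvd_coprimes hm.coprime_two_right hwm' h
    · exact Or.inr ⟨Ne.symm hw.1, by simpa [B] using hwm⟩
  calc (powerGraph G).minDegree ≤ #((powerGraph G).neighborFinset t) :=
        (powerGraph G).minDegree_le_degree t
    _ ≤ #(insert 1 (B.erase t)) := card_le_card hnbr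
    _ ≤ #(B.erase t) + 1 := card_insert_le _ _
    _ = #B := card_erase_add_one htB
    _ ≤ m := hBA.trans hA

end TwiceOdd

theorem powerGraph_isClique_pow_eq_one {p k : ℕ} (hp : p.Prime) :
    (powerGraph G).IsClique {x : G | x ^ p ^ k = 1} := fun _ hx _ hy hxy =>
  powerGraph_adj_iff_orderOf_dvd.2 ⟨hxy, Nat.dvd_or_dvd_of_dvd_prime_pow hp
    (orderOf_dvd_of_pow_eq_one hx) (orderOf_dvd_of_pow_eq_one hy)⟩

theorem powerGraph_isClique_pow_ne_one {p k : ℕ} (hp : p.Prime)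
    (hcard : Fintype.card G = 2 * p ^ k) : (powerGraph G).IsClique {x : G | x ^ p ^ k ≠ 1} := by
  intro x hx y hy hxy
  obtain ⟨a, ha, hxa⟩ := Nat.exists_eq_two_mul_of_dvd_two_mul (hcard ▸ orderOf_dvd_card)
    (mt orderOf_dvd_iff_pow_eq_one.1 hx)
  obtain ⟨b, hb, hyb⟩ := Nat.exists_eq_two_mul_of_dvd_two_mul (hcard ▸ orderOf_dvd_card)
    (mt orderOf_dvd_iff_pow_eq_one.1 hy)
  refine powerGraph_adj_iff_orderOf_dvd.2 ⟨hxy, ?_⟩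
  rw [hxa, hyb]
  exact (Nat.dvd_or_dvd_of_dvd_prime_pow hp ha hb).imp (mul_dvd_mul_left 2) (mul_dvd_mul_left 2)

theorem le_vertexConnectivity_of_card_eq_two_mul_prime_pow {p k : ℕ} (hp : p.Prime)
    (hp2 : p ≠ 2) (hcard : Fintype.card G = 2 * p ^ k) :
    p ^ k ≤ vertexConnectivity (powerGraph G) := by
  classical
  have hodd : Odd (p ^ k) := (hp.odd_of_ne_two hp2).pow
  obtain ⟨t, ht⟩ := IsCyclic.exists_orderOf_eq (G := G) (hcard ▸ dvd_mul_right 2 _)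
  have hpk := pow_pos hp.pos k
  refine le_vertexConnectivity (by omega) fun S hS => ?_
  -- Fewer than `p ^ k` vertices cannot meet all `p ^ k` disjoint edges `{x, x * t}`.
  obtain ⟨x, -, hx⟩ := exists_mem_notMem_of_card_lt_card (s := S ∪ S.image (· * t⁻¹))
    (t := univ) <| by
      calc #(S ∪ S.image (· * t⁻¹)) ≤ #S + #S :=
            (card_union_le _ _).trans (by grw [card_image_le])
        _ < #(univ : Finset G) := by rw [card_univ, hcard]; omega
  have hxS : x ∉ S := fun h => hx (mem_union_left _ h)
  have hxtS : x * t ∉ S := fun h => hx (mem_union_right _ (mem_image.2 ⟨x * t, h, by simp⟩))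
  have hxtt : x * t * t = x := by rw [mul_assoc, ← sq, ← ht, pow_orderOf_eq_one, mul_one]
  have hcover : ((↑S : Set G)ᶜ) ⊆ {x | x ^ p ^ k = 1} ∪ {x | x ^ p ^ k ≠ 1} := fun w _ => em _
  have hiff := IsCyclic.mul_pow_eq_one_iff_pow_ne_one hodd hcard ht x
  by_cases h : x ^ p ^ k = 1
  · exact SimpleGraph.preconnected_induce_of_isClique_union (powerGraph_isClique_pow_eq_one hp)
      (powerGraph_isClique_pow_ne_one hp hcard) hcover (a := ⟨x, hxS⟩) (b := ⟨x * t, hxtS⟩) h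
      (by simpa [hiff] using h) (powerGraph_adj_mul_of_pow_eq_one hodd ht h)
  · refine SimpleGraph.preconnected_induce_of_isClique_union (powerGraph_isClique_pow_eq_one hp)
      (powerGraph_isClique_pow_ne_one hp hcard) hcover (a := ⟨x * t, hxtS⟩) (b := ⟨x, hxS⟩)
      (hiff.2 h) h ?_
    simpa [hxtt] using powerGraph_adj_mul_of_pow_eq_one hodd ht (hiff.2 h)

end Backward

theorem power_graph_kappa_eq_delta_iff_cyclic
    {G : Type*} [Group G] [Fintype G] (hG : IsCyclic G) :
    vertexConnectivity (powerGraph G) = (powerGraph G).minDegree ↔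
      ∃ p k : ℕ, p.Prime ∧ (Fintype.card G = p ^ k ∨ Fintype.card G = 2 * p ^ k) := by
  refine ⟨fun h => by_contra fun hn => (powerGraph_vertexConnectivity_lt_minDegree hn).ne h, ?_⟩
  rintro ⟨p, k, hp, hcard | hcard⟩
  · exact powerGraph_vertexConnectivity_eq_minDegree_of_card_eq_prime_pow hp hcard
  rcases eq_or_ne p 2 with rfl | hp2
  · exact powerGraph_vertexConnectivity_eq_minDegree_of_card_eq_prime_pow Nat.prime_two
      (k := k + 1) (by rw [hcard, pow_succ'])
  · exact le_antisymm vertexConnectivity_le_minDegree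
      ((powerGraph_minDegree_le_of_card_eq_two_mul (hp.odd_of_ne_two hp2).pow hcard).trans
        (le_vertexConnectivity_of_card_eq_two_mul_prime_pow hp hp2 hcard))
end

section
/- Let G be a finite nilpotent group with Sylow subgroups P_1, ..., P_r, and fix k ∈ [r]. If y_k ∈ P_k generates a maximal cyclic subgroup of P_k of minimum order (among maximal cyclic subgroups of P_k), then deg(y_k) ≤ deg(x_k) in the power graph P(G) for every x_k ∈ P_k. -/
/-!
Write `G = P × K` with `P` the Sylow `p`-subgroup containing `x` and `y`, and `K` the product of
the other Sylow subgroups, so that elements of `P` and `K` commute and have coprime orders. For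
`v ∈ P` the closed neighbourhood of `v` consists of the `z` with `v ∈ ⟨z⟩`, which are the products
`a * b` (`a ∈ P`, `b ∈ K`) with `v ∈ ⟨a⟩`, together with the elements of `⟨v⟩` generating a proper
subgroup, i.e. `⟨v ^ p⟩`. Hence `deg v + 1 = |K| u(v) + o(v) / p` with `u(v) = #{a ∈ P | v ∈ ⟨a⟩}`.
As the subgroups of a cyclic `p`-group form a chain, `u(y) = o(y) - o(y) / p` when `⟨y⟩` is maximal
cyclic, while `u(x) ≥ o(w) - o(x) / p` for a maximal cyclic `⟨w⟩ ∋ x`; now `o(y) ≤ o(w)`.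
-/

open Subgroup

section PowerGraph

variable {G : Type*} [Group G]

theorem mem_zpowers_iff_exists_pos_pow [Finite G] {x z : G} :
    x ∈ zpowers z ↔ ∃ k : ℕ, 0 < k ∧ x = z ^ k := by
  refine ⟨fun h => ?_, fun ⟨k, _, hk⟩ => hk ▸ npow_mem_zpowers z k⟩
  obtain ⟨k, hk⟩ := (mem_powers_iff_mem_zpowers (x := z)).mpr h
  rcases Nat.eq_zero_or_pos k with rfl | hk0
  · exact ⟨orderOf z, orderOf_pos z, by simp [← hk]⟩
  · exact ⟨k, hk0, hk.symm⟩

theorem powerGraph_adj_iff [Finite G] {x z : G} :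
    (powerGraph G).Adj x z ↔ x ≠ z ∧ (x ∈ zpowers z ∨ z ∈ zpowers x) := by
  simp only [powerGraph, mem_zpowers_iff_exists_pos_pow]

theorem powerGraph_degree_add_one_s8 [Fintype G] (x : G) :
    (powerGraph G).degree x + 1 =
      {z | x ∈ zpowers z}.ncard + {z | z ∈ zpowers x ∧ x ∉ zpowers z}.ncard := by
  have hnbhd : insert x ((powerGraph G).neighborSet x) =
      {z | x ∈ zpowers z} ∪ {z | z ∈ zpowers x ∧ x ∉ zpowers z} := by
    ext z
    simp only [Set.mem_insert_iff, SimpleGraph.mem_neighborSet, powerGraph_adj_iff,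
      Set.mem_union, Set.mem_ofPred_eq]
    rcases eq_or_ne z x with rfl | hzx
    · simp [mem_zpowers]
    · tauto
  have hdisj : Disjoint {z | x ∈ zpowers z} {z | z ∈ zpowers x ∧ x ∉ zpowers z} :=
    Set.disjoint_left.mpr fun _ h h' => h'.2 h
  rw [← Set.ncard_union_eq hdisj, ← hnbhd,
    Set.ncard_insert_of_notMem ((powerGraph G).notMem_neighborSet_self),
    Set.ncard_eq_toFinset_card', Set.toFinset_card, SimpleGraph.card_neighborSet_eq_degree]

end PowerGraph

section Cyclic

variable {G : Type*} [Group G] [Finite G]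

/-- In a cyclic group the `d`-torsion has at most `d` elements, so it is the subgroup `⟨z⟩`
whenever `z` has order `d`. -/
theorem mem_zpowers_iff_orderOf_dvd {w x z : G} (hx : x ∈ zpowers w) (hz : z ∈ zpowers w) :
    x ∈ zpowers z ↔ orderOf x ∣ orderOf z := by
  refine ⟨orderOf_dvd_of_mem_zpowers, fun h => ?_⟩
  classical
  let W := zpowers w
  have : Fintype W := Fintype.ofFinite W
  let z' : W := ⟨z, hz⟩
  let x' : W := ⟨x, hx⟩
  have hsub : (zpowers z' : Set W).toFinset ⊆ Finset.univ.filter (· ^ orderOf z' = 1) := by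
    intro a ha
    obtain ⟨n, rfl⟩ := mem_zpowers_iff.mp (Set.mem_toFinset.mp ha)
    rw [Finset.mem_filter, ← zpow_natCast, ← zpow_mul, mul_comm, zpow_mul, zpow_natCast,
      pow_orderOf_eq_one, one_zpow]
    exact ⟨Finset.mem_univ _, rfl⟩
  have heq := Finset.eq_of_subset_of_card_le hsub <| by
    rw [Set.toFinset_card, ← Nat.card_eq_fintype_card, SetLike.coe_sort_coe, Nat.card_zpowers]
    exact IsCyclic.card_pow_eq_one_le (orderOf_pos z')
  have hx' : x' ∈ zpowers z' := by
    rw [← SetLike.mem_coe, ← Set.mem_toFinset, heq, Finset.mem_filter]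
    refine ⟨Finset.mem_univ _, orderOf_dvd_iff_pow_eq_one.mp ?_⟩
    rwa [Subgroup.orderOf_mk, Subgroup.orderOf_mk]
  simpa using (Subgroup.mem_map_of_mem W.subtype hx')

end Cyclic

section PElement

variable {G : Type*} [Group G] {p n : ℕ}

theorem exists_orderOf_eq_prime_pow_succ (hp : p.Prime) {x : G} (hx : orderOf x ∣ p ^ n)
    (hx1 : x ≠ 1) : ∃ s, orderOf x = p ^ (s + 1) ∧ orderOf (x ^ p) = p ^ s := by
  obtain ⟨_ | s, -, hs⟩ := (Nat.dvd_prime_pow hp).mp hx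
  · exact absurd (orderOf_eq_one_iff.mp (by simpa using hs)) hx1
  · refine ⟨s, hs, ?_⟩
    rw [orderOf_pow_of_dvd hp.ne_zero (hs ▸ dvd_pow_self p s.succ_ne_zero), hs, pow_succ,
      Nat.mul_div_cancel _ hp.pos]

variable [Finite G]

/-- Subgroups of a cyclic `p`-group form a chain, and `⟨x ^ p⟩` is the maximal subgroup of `⟨x⟩`. -/
theorem setOf_mem_zpowers_and_not_mem_zpowers_eq (hp : p.Prime) {w x : G}
    (hw : orderOf w ∣ p ^ n) (hx : x ∈ zpowers w) (hx1 : x ≠ 1) :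
    {z | z ∈ zpowers w ∧ x ∉ zpowers z} = zpowers (x ^ p) := by
  obtain ⟨s, hs, hxp⟩ :=
    exists_orderOf_eq_prime_pow_succ hp ((orderOf_dvd_of_mem_zpowers hx).trans hw) hx1
  ext z
  simp only [Set.mem_ofPred_eq, SetLike.mem_coe]
  constructor
  · rintro ⟨hz, hxz⟩
    obtain ⟨j, -, hj⟩ := (Nat.dvd_prime_pow hp).mp ((orderOf_dvd_of_mem_zpowers hz).trans hw)
    rw [mem_zpowers_iff_orderOf_dvd hx hz, hs, hj, Nat.pow_dvd_pow_iff_le_right hp.one_lt] at hxz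
    rw [mem_zpowers_iff_orderOf_dvd hz (pow_mem hx p), hj, hxp]
    exact Nat.pow_dvd_pow p (by omega)
  · intro hz
    have hzx : z ∈ zpowers x := zpowers_le.mpr (pow_mem (mem_zpowers x) p) hz
    refine ⟨zpowers_le.mpr hx hzx, fun hxz => ?_⟩
    have := (orderOf_dvd_of_mem_zpowers hxz).trans (orderOf_dvd_of_mem_zpowers hz)
    rw [hs, hxp, Nat.pow_dvd_pow_iff_le_right hp.one_lt] at this
    omega

theorem ncard_setOf_mem_zpowers_and_not_mem_zpowers (hp : p.Prime) {w x : G}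
    (hw : orderOf w ∣ p ^ n) (hx : x ∈ zpowers w) :
    {z | z ∈ zpowers w ∧ x ∉ zpowers z}.ncard = orderOf x / p := by
  rcases eq_or_ne x 1 with rfl | hx1
  · simpa using (Nat.div_eq_of_lt hp.one_lt).symm
  obtain ⟨s, hs, hxp⟩ :=
    exists_orderOf_eq_prime_pow_succ hp ((orderOf_dvd_of_mem_zpowers hx).trans hw) hx1
  rw [setOf_mem_zpowers_and_not_mem_zpowers_eq hp hw hx hx1, ← Nat.card_coe_set_eq,
    SetLike.coe_sort_coe, Nat.card_zpowers, hxp, hs, pow_succ, Nat.mul_div_cancel _ hp.pos]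

theorem ncard_setOf_mem_zpowers_and_mem_zpowers_add (hp : p.Prime) {w x : G}
    (hw : orderOf w ∣ p ^ n) (hx : x ∈ zpowers w) :
    {z | z ∈ zpowers w ∧ x ∈ zpowers z}.ncard + orderOf x / p = orderOf w := by
  rw [← ncard_setOf_mem_zpowers_and_not_mem_zpowers hp hw hx, ← Nat.card_zpowers,
    ← SetLike.coe_sort_coe, Nat.card_coe_set_eq]
  exact Set.ncard_inter_add_ncard_sdiff_eq_ncard _ _ (Set.toFinite _)

end PElement

section DirectProduct

variable {G : Type*} [Group G]

theorem Commute.mem_zpowers_mul_of_coprime {a b : G} (hab : Commute a b)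
    (hco : (orderOf a).Coprime (orderOf b)) : a ∈ zpowers (a * b) := by
  obtain ⟨e, he1, he0⟩ := Nat.chineseRemainder hco 1 0
  refine mem_zpowers_iff.mpr ⟨e, ?_⟩
  rw [zpow_natCast, hab.mul_pow, pow_eq_pow_iff_modEq.mpr he1, pow_eq_pow_iff_modEq.mpr he0,
    pow_one, pow_zero, mul_one]

variable {P K : Subgroup G}

theorem mem_zpowers_mul_iff_of_coprime (hcomm : ∀ a ∈ P, ∀ b ∈ K, Commute a b)
    (hcop : (Nat.card P).Coprime (Nat.card K)) {v a b : G} (hv : v ∈ P) (ha : a ∈ P)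
    (hb : b ∈ K) : v ∈ zpowers (a * b) ↔ v ∈ zpowers a := by
  refine ⟨fun h => ?_, fun h => zpowers_le.mpr ?_ h⟩
  · obtain ⟨n, rfl⟩ := mem_zpowers_iff.mp h
    rw [(hcomm a ha b hb).mul_zpow] at hv ⊢
    have hbn : b ^ n ∈ P := by simpa using mul_mem (inv_mem (zpow_mem ha n)) hv
    rw [disjoint_def.mp (disjoint_of_coprime_natCard hcop) hbn (zpow_mem hb n), mul_one]
    exact zpow_mem (mem_zpowers a) n
  · refine (hcomm a ha b hb).mem_zpowers_mul_of_coprime ?_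
    exact (hcop.coprime_dvd_left (P.orderOf_dvd_natCard ha)).coprime_dvd_right
      (K.orderOf_dvd_natCard hb)

theorem ncard_setOf_mem_zpowers_eq_card_mul [Finite G] (hcomm : ∀ a ∈ P, ∀ b ∈ K, Commute a b)
    (hcop : (Nat.card P).Coprime (Nat.card K)) (hcard : Nat.card P * Nat.card K = Nat.card G)
    {v : G} (hv : v ∈ P) :
    {z | v ∈ zpowers z}.ncard = Nat.card K * {z | z ∈ P ∧ v ∈ zpowers z}.ncard := by
  let e : P × K ≃ G := Equiv.ofBijective _ (isComplement'_of_coprime hcard hcop)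
  calc {z | v ∈ zpowers z}.ncard = Nat.card {ab : P × K // v ∈ zpowers (ab.1 : G)} := by
        rw [← Nat.card_coe_set_eq]
        exact Nat.card_congr (e.subtypeEquiv fun ab =>
          (mem_zpowers_mul_iff_of_coprime hcomm hcop hv ab.1.2 ab.2.2).symm).symm
    _ = Nat.card {a : P // v ∈ zpowers (a : G)} * Nat.card K := by
        rw [← Nat.card_prod]
        exact Nat.card_congr
          (Equiv.prodSubtypeFstEquivSubtypeProd (p := fun a : P => v ∈ zpowers (a : G)))
    _ = Nat.card K * {z | z ∈ P ∧ v ∈ zpowers z}.ncard := by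
        rw [mul_comm, ← Nat.card_coe_set_eq]
        exact congrArg _
          (Nat.card_congr (Equiv.subtypeSubtypeEquivSubtypeInter (· ∈ P) (v ∈ zpowers ·)))

end DirectProduct

theorem Nat.factorization_prod_pow_apply {ι : Type*} [Fintype ι] {p : ι → ℕ}
    (hp : ∀ i, (p i).Prime) (hinj : Function.Injective p) (α : ι → ℕ) (i : ι) :
    (∏ j, p j ^ α j).factorization (p i) = α i := by
  rw [Nat.factorization_prod fun j _ => (pow_pos (hp j).pos _).ne', Finset.sum_apply',
    Finset.sum_eq_single i]
  · simp [(hp i).factorization_pow]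
  · intro j _ hji
    simp [(hp j).factorization_pow, hinj.ne hji]
  · simp

section Complement

variable {G : Type*} [Group G] [Finite G]

theorem Group.IsNilpotent.normal_of_card_eq (hG : Group.IsNilpotent G) {p : ℕ} (hp : p.Prime)
    {H : Subgroup G} (hH : Nat.card H = p ^ (Nat.card G).factorization p) : H.Normal := by
  have : Fact p.Prime := ⟨hp⟩
  have hsylow := (Group.isNilpotent_of_finite_tfae (G := G)).out 0 3
  simpa using hsylow.mp hG p this (Sylow.ofCard H hH)

/-- The complement is the internal direct product of the `P i` with `i ≠ k`. -/
theorem exists_commuting_complement {ι : Type*} [Fintype ι] [DecidableEq ι]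
    (P : ι → Subgroup G) (hnormal : ∀ i, (P i).Normal)
    (hcop : Pairwise fun i j => (Nat.card (P i)).Coprime (Nat.card (P j)))
    (hcard : Nat.card G = ∏ i, Nat.card (P i)) (k : ι) :
    ∃ K : Subgroup G, (∀ a ∈ P k, ∀ b ∈ K, Commute a b) ∧
      (Nat.card (P k)).Coprime (Nat.card K) ∧ Nat.card (P k) * Nat.card K = Nat.card G := by
  have hcomm : Pairwise fun i j => ∀ x y : G, x ∈ P i → y ∈ P j → Commute x y :=
    fun i j hij => commute_of_normal_of_disjoint _ _ (hnormal i) (hnormal j)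
      (disjoint_of_coprime_natCard (hcop hij))
  let Q : {i // i ≠ k} → Subgroup G := fun i => P i
  have hQcomm : Pairwise fun i j => ∀ x y : G, x ∈ Q i → y ∈ Q j → Commute x y :=
    fun i j hij => hcomm (Subtype.coe_injective.ne hij)
  have : ∀ i, Fintype (Q i) := fun i => Fintype.ofFinite _
  have hinj : Function.Injective (noncommPiCoprod hQcomm) :=
    injective_noncommPiCoprod_of_iSupIndep <| independent_of_coprime_order hQcomm
      fun i j hij => by simpa [← Nat.card_eq_fintype_card] using hcop (Subtype.coe_injective.ne hij)
  have hcardK : Nat.card (noncommPiCoprod hQcomm).range = ∏ i : {i // i ≠ k}, Nat.card (P i) := by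
    rw [← Nat.card_congr (MonoidHom.ofInjective hinj).toEquiv, Nat.card_pi]
  refine ⟨(noncommPiCoprod hQcomm).range, fun a ha b hb => ?_, ?_, ?_⟩
  · have hK : ⨆ i, Q i ≤ centralizer (P k) := iSup_le fun i _ hy =>
      mem_centralizer_iff.mpr fun _ hx => hcomm i.2.symm _ _ hx hy
    rw [noncommPiCoprod_range] at hb
    exact mem_centralizer_iff.mp (hK hb) a ha
  · rw [hcardK]
    exact Nat.Coprime.prod_right fun i _ => hcop i.2.symm
  · rw [hcardK, hcard, Fintype.prod_eq_mul_prod_subtype_ne _ k]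

end Complement

theorem Nat.sub_div_monotone (p : ℕ) : Monotone fun n => n - n / p :=
  monotone_nat_of_le_succ fun n => by
    have hsucc : (n + 1) / p = n / p + if p ∣ n + 1 then 1 else 0 := Nat.succ_div
    have hle := Nat.div_le_self n p
    split_ifs at hsucc <;> omega

section Degree

variable {G : Type*} [Group G]

theorem exists_isMaximalCyclicIn_mem [Finite G] {H : Subgroup G} {x : G} (hx : x ∈ H) :
    ∃ M, IsMaximalCyclicIn H M ∧ x ∈ M := by
  obtain ⟨M, hxM, hM⟩ := Finite.exists_le_maximal (p := fun N : Subgroup G => IsCyclic N ∧ N ≤ H)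
    (a := zpowers x) ⟨inferInstance, zpowers_le.mpr hx⟩
  exact ⟨M, ⟨hM.1.1, hM.1.2, fun N hN hNH hMN => le_antisymm hMN (hM.2 ⟨hN, hNH⟩ hMN)⟩,
    hxM (mem_zpowers x)⟩

theorem setOf_mem_and_mem_zpowers_eq_of_isMaximalCyclicIn {H : Subgroup G} {y : G}
    (hy : IsMaximalCyclicIn H (zpowers y)) :
    {z | z ∈ H ∧ y ∈ zpowers z} = {z | z ∈ zpowers y ∧ y ∈ zpowers z} := by
  ext z
  refine ⟨fun ⟨hz, hyz⟩ => ⟨?_, hyz⟩, fun ⟨hz, hyz⟩ => ⟨hy.2.1 hz, hyz⟩⟩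
  rw [hy.2.2 _ inferInstance (zpowers_le.mpr hz) (zpowers_le.mpr hyz)]
  exact mem_zpowers z

variable [Fintype G] {p n : ℕ} {P K : Subgroup G}

theorem powerGraph_degree_add_one_eq (hp : p.Prime) (hP : Nat.card P = p ^ n)
    (hcomm : ∀ a ∈ P, ∀ b ∈ K, Commute a b) (hcop : (Nat.card P).Coprime (Nat.card K))
    (hcard : Nat.card P * Nat.card K = Nat.card G) {v : G} (hv : v ∈ P) :
    (powerGraph G).degree v + 1 =
      Nat.card K * {z | z ∈ P ∧ v ∈ zpowers z}.ncard + orderOf v / p := by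
  rw [powerGraph_degree_add_one_s8, ncard_setOf_mem_zpowers_eq_card_mul hcomm hcop hcard hv,
    ncard_setOf_mem_zpowers_and_not_mem_zpowers hp (hP ▸ P.orderOf_dvd_natCard hv)
      (mem_zpowers v)]

theorem powerGraph_degree_le_of_isMaximalCyclicIn (hp : p.Prime) (hP : Nat.card P = p ^ n)
    (hcomm : ∀ a ∈ P, ∀ b ∈ K, Commute a b) (hcop : (Nat.card P).Coprime (Nat.card K))
    (hcard : Nat.card P * Nat.card K = Nat.card G) {y : G}
    (hymax : IsMaximalCyclicIn P (zpowers y))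
    (hymin : ∀ N : Subgroup G, IsMaximalCyclicIn P N → Nat.card (zpowers y) ≤ Nat.card N)
    {x : G} (hx : x ∈ P) : (powerGraph G).degree y ≤ (powerGraph G).degree x := by
  obtain ⟨M, hM, hxM⟩ := exists_isMaximalCyclicIn_mem hx
  obtain ⟨w, rfl⟩ := (M.isCyclic_iff_exists_zpowers_eq_top).mp hM.1
  have hyP : y ∈ P := hymax.2.1 (mem_zpowers y)
  have hU : {z | z ∈ P ∧ y ∈ zpowers z}.ncard + orderOf y / p = orderOf y := by
    rw [setOf_mem_and_mem_zpowers_eq_of_isMaximalCyclicIn hymax]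
    exact ncard_setOf_mem_zpowers_and_mem_zpowers_add hp (hP ▸ P.orderOf_dvd_natCard hyP)
      (mem_zpowers y)
  have hV : orderOf w ≤ {z | z ∈ P ∧ x ∈ zpowers z}.ncard + orderOf x / p := by
    rw [← ncard_setOf_mem_zpowers_and_mem_zpowers_add hp
      (hP ▸ P.orderOf_dvd_natCard (hM.2.1 (mem_zpowers w))) hxM]
    refine Nat.add_le_add_right (Set.ncard_le_ncard fun z hz => ?_) _
    exact ⟨hM.2.1 hz.1, hz.2⟩
  have hyw : orderOf y ≤ orderOf w := by simpa only [Nat.card_zpowers] using hymin _ hM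
  have hxw : orderOf x / p ≤ orderOf w / p :=
    Nat.div_le_div_right (Nat.le_of_dvd (orderOf_pos w) (orderOf_dvd_of_mem_zpowers hxM))
  have hUV : {z | z ∈ P ∧ y ∈ zpowers z}.ncard ≤ {z | z ∈ P ∧ x ∈ zpowers z}.ncard :=
    calc _ = orderOf y - orderOf y / p := by omega
      _ ≤ orderOf w - orderOf w / p := Nat.sub_div_monotone p hyw
      _ ≤ _ := by omega
  have hK : 1 ≤ Nat.card K := Nat.card_pos
  have hdy := powerGraph_degree_add_one_eq hp hP hcomm hcop hcard hyP
  have hdx := powerGraph_degree_add_one_eq hp hP hcomm hcop hcard hx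
  nlinarith

end Degree

theorem degree_min_in_sylow_general
    {G : Type*} [Group G] [Fintype G] (hnil : Group.IsNilpotent G)
    (r : ℕ) (p α : Fin r → ℕ) (P : Fin r → Subgroup G)
    (hp : ∀ i, (p i).Prime) (hmono : StrictMono p)
    (hcard : Fintype.card G = ∏ i, p i ^ α i)
    (hP : ∀ i, Nat.card ↥(P i) = p i ^ α i)
    (k : Fin r) (y : G)
    (hymax : IsMaximalCyclicIn (P k) (Subgroup.zpowers y))
    (hymin : ∀ N : Subgroup G, IsMaximalCyclicIn (P k) N →
      Nat.card ↥(Subgroup.zpowers y) ≤ Nat.card ↥N) :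
    ∀ x ∈ P k, (powerGraph G).degree y ≤ (powerGraph G).degree x := by
  intro x hx
  have hnormal : ∀ i, (P i).Normal := fun i => hnil.normal_of_card_eq (hp i) <| by
    rw [hP i, Nat.card_eq_fintype_card, hcard, Nat.factorization_prod_pow_apply hp hmono.injective]
  have hcop : Pairwise fun i j => (Nat.card (P i)).Coprime (Nat.card (P j)) := fun i j hij => by
    simp only [hP]
    exact Nat.Coprime.pow _ _ ((Nat.coprime_primes (hp i) (hp j)).mpr (hmono.injective.ne hij))
  obtain ⟨K, hcomm, hcopK, hcardK⟩ := exists_commuting_complement P hnormal hcop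
    (by simp only [Nat.card_eq_fintype_card, hcard, ← hP]) k
  exact powerGraph_degree_le_of_isMaximalCyclicIn (hp k) (hP k) hcomm hcopK hcardK hymax hymin hx

/-- If `y` generates a maximal cyclic subgroup of the Sylow subgroup `P k` of minimum
order, then `y` has minimum degree in `P(G)` among the vertices in `P k`. -/
theorem degree_min_in_sylow
    {G : Type*} [Group G] [Fintype G] (hnil : Group.IsNilpotent G)
    (r : ℕ) (p α : Fin r → ℕ) (P : Fin r → Subgroup G)
    (hp : ∀ i, (p i).Prime) (hmono : StrictMono p) (hα : ∀ i, 1 ≤ α i)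
    (hcard : Fintype.card G = ∏ i, p i ^ α i)
    (hP : ∀ i, Nat.card ↥(P i) = p i ^ α i)
    (k : Fin r) (y : G) (hy : y ∈ P k)
    (hymax : IsMaximalCyclicIn (P k) (Subgroup.zpowers y))
    (hymin : ∀ N : Subgroup G, IsMaximalCyclicIn (P k) N →
      Nat.card ↥(Subgroup.zpowers y) ≤ Nat.card ↥N) :
    ∀ x ∈ P k, (powerGraph G).degree y ≤ (powerGraph G).degree x :=
  degree_min_in_sylow_general hnil r p α P hp hmono hcard hP k y hymax hymin
end
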